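/- arXiv:2010.01539 — 3 statements merged into one kernel-verified Lean document; each statement's English description precedes it below -/
import Mathlib

section
/- Let A be an n×n matrix with eigenvalues λ₁,…,λₙ (listed with multiplicity). Define P₀ = I and P_k = ∏_{j=1}^k (A − λ_j I) for k = 1,…,n−1, and let r₁,…,rₙ satisfy r₁' = λ₁ r₁, r₁(0)=1, and r_k' = λ_k r_k + r_{k−1}, r_k(0)=0 for k ≥ 2. Then exp(A t) = Σ_{k=1}^n r_k(t)·P_{k−1} for all t. -/
/-!
The matrix function `Φ t = ∑ k, r k t • P k` satisfies `Φ 0 = 1` and, because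
`A * P k = P (k + 1) + λ k • P k`, the recursion for the `r k` telescopes into `Φ' = A * Φ`;
the boundary term vanishes since `P n = 0` by Cayley–Hamilton. Any solution of `Φ' = A * Φ`
equals `exp (t • A) * Φ 0`, as `s ↦ exp ((t - s) • A) * Φ s` has zero derivative.
-/

open NormedSpace

section

open Finset Polynomial

theorem eq_exp_smul_mul_of_hasDerivAt {𝔸 : Type*} [NormedRing 𝔸] [NormedAlgebra ℝ 𝔸]
    [CompleteSpace 𝔸] {a : 𝔸} {Φ : ℝ → 𝔸} (hΦ : ∀ s, HasDerivAt Φ (a * Φ s) s) (t : ℝ) :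
    Φ t = exp (t • a) * Φ 0 := by
  have hexp (s : ℝ) :
      HasDerivAt (fun u : ℝ => exp ((t - u) • a)) (-(exp ((t - s) • a) * a)) s :=
    ((hasDerivAt_exp_smul_const a (t - s)).scomp s
      ((hasDerivAt_id s).const_sub t)).congr_deriv (neg_one_smul ℝ _)
  have hconst (s : ℝ) : HasDerivAt (fun u => exp ((t - u) • a) * Φ u) 0 s := by
    convert (hexp s).fun_mul (hΦ s) using 1
    rw [neg_mul, mul_assoc, neg_add_cancel]
  simpa using is_const_of_deriv_eq_zero (fun s => (hconst s).differentiableAt)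
    (fun s => (hconst s).deriv) t 0

theorem aeval_prod_X_sub_C_eq_of_succ_eq_mul {S R : Type*} [CommRing S] [Ring R] [Algebra S R]
    {a : R} {lam : ℕ → S} {P : ℕ → R} (hP0 : P 0 = 1)
    (hPsucc : ∀ k, P (k + 1) = P k * (a - lam k • 1)) (k : ℕ) :
    aeval a (∏ j ∈ range k, (X - C (lam j))) = P k := by
  induction k with
  | zero => simp [hP0]
  | succ k ih => simp [prod_range_succ, ih, hPsucc, Algebra.algebraMap_eq_smul_one]

theorem mul_eq_add_smul_of_succ_eq_mul {S R : Type*} [CommRing S] [Ring R] [Algebra S R]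
    {a : R} {lam : ℕ → S} {P : ℕ → R} (hP0 : P 0 = 1)
    (hPsucc : ∀ k, P (k + 1) = P k * (a - lam k • 1)) (k : ℕ) :
    a * P k = P (k + 1) + lam k • P k := by
  have hcomm : Commute a (P k) := by
    rw [← aeval_prod_X_sub_C_eq_of_succ_eq_mul hP0 hPsucc]
    simpa using (commute_X _).map (aeval a)
  rw [hcomm.eq, hPsucc, mul_sub, mul_smul_comm, mul_one, sub_add_cancel]

theorem hasDerivAt_sum_smul_of_mul_eq_add_smul {𝔸 : Type*} [NormedRing 𝔸] [NormedAlgebra ℂ 𝔸]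
    {a : 𝔸} {lam : ℕ → ℂ} {P : ℕ → 𝔸} {m : ℕ} (hPa : ∀ k, a * P k = P (k + 1) + lam k • P k)
    (hPm : P (m + 1) = 0) {r : ℕ → ℝ → ℂ}
    (hr0 : ∀ t : ℝ, HasDerivAt (r 0) (lam 0 * r 0 t) t)
    (hr : ∀ k, 1 ≤ k → ∀ t : ℝ, HasDerivAt (r k) (lam k * r k t + r (k - 1) t) t) (t : ℝ) :
    HasDerivAt (fun s => ∑ k ∈ range (m + 1), r k s • P k)
      (a * ∑ k ∈ range (m + 1), r k t • P k) t := by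
  have halg : a * ∑ k ∈ range (m + 1), r k t • P k
      = ∑ k ∈ range m, (lam (k + 1) * r (k + 1) t + r (k + 1 - 1) t) • P (k + 1)
        + (lam 0 * r 0 t) • P 0 := by
    simp only [mul_sum, mul_smul_comm, hPa, smul_add, sum_add_distrib, smul_smul]
    rw [sum_range_succ _ m, hPm, smul_zero, add_zero, sum_range_succ' _ m]
    simp only [add_smul, sum_add_distrib, Nat.add_sub_cancel, mul_comm (r _ t)]
    abel
  rw [halg]
  simp_rw [sum_range_succ' _ m]
  exact (HasDerivAt.fun_sum fun k (_ : k ∈ range m) =>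
    (hr (k + 1) k.succ_pos t).smul_const (P (k + 1))).fun_add ((hr0 t).smul_const (P 0))

end

/-- Putzer's spectral formula for the matrix exponential. -/
theorem putzer_spectral_formula
    (n : ℕ) (hn : 0 < n) (A : Matrix (Fin n) (Fin n) ℂ) (lam : ℕ → ℂ)
    (hchar : A.charpoly = ∏ j ∈ Finset.range n,
      (Polynomial.X - Polynomial.C (lam j)))
    (P : ℕ → Matrix (Fin n) (Fin n) ℂ)
    (hP0 : P 0 = 1)
    (hPsucc : ∀ k, P (k + 1) = P k * (A - lam k • (1 : Matrix (Fin n) (Fin n) ℂ)))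
    (r : ℕ → ℝ → ℂ)
    (hr0_init : r 0 0 = 1)
    (hr0_deriv : ∀ t : ℝ, HasDerivAt (r 0) (lam 0 * r 0 t) t)
    (hrk_init : ∀ k, 1 ≤ k → r k 0 = 0)
    (hrk_deriv : ∀ k, 1 ≤ k → ∀ t : ℝ,
      HasDerivAt (r k) (lam k * r k t + r (k - 1) t) t)
    (t : ℝ) :
    exp ((t : ℂ) • A) = ∑ k ∈ Finset.range n, r k t • P k := by
  open scoped Matrix.Norms.Operator in
  obtain ⟨m, rfl⟩ := Nat.exists_eq_add_one_of_ne_zero hn.ne'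
  have hPm : P (m + 1) = 0 := by
    rw [← aeval_prod_X_sub_C_eq_of_succ_eq_mul hP0 hPsucc, ← hchar, Matrix.aeval_self_charpoly]
  have hinit : ∑ k ∈ Finset.range (m + 1), r k 0 • P k = 1 := by
    rw [Finset.sum_range_succ', Finset.sum_eq_zero fun k _ => by
      rw [hrk_init (k + 1) k.succ_pos, zero_smul], hr0_init, hP0, zero_add, one_smul]
  have hderiv := hasDerivAt_sum_smul_of_mul_eq_add_smul
    (mul_eq_add_smul_of_succ_eq_mul hP0 hPsucc) hPm hr0_deriv hrk_deriv
  rw [eq_exp_smul_mul_of_hasDerivAt hderiv t, hinit, mul_one]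
  -- the real scalar action on a complex algebra is `(t : ℂ) • _` by definition
  rfl
end

section
/- Under the hypotheses of the perturbed-integral-equation setup, for any N, M and all t ∈ [t₀, t_N], ‖y_{N+M}(t) − y_N(t)‖ ≤ 2S(t_N−t₀)·h·exp(K(t_N−t₀)), where h is the larger of the two mesh sizes. -/
open MeasureTheory intervalIntegral

/-- Gronwall estimate for the distance between two approximate solutions of the
perturbed integral equation, in terms of the larger mesh size `h`. -/
theorem dist_approx_solutions_le
    (n : ℕ) (t₀ tN : ℝ) (h_le : t₀ ≤ tN)
    (y₀ : EuclideanSpace ℝ (Fin n))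
    (F : EuclideanSpace ℝ (Fin n) → EuclideanSpace ℝ (Fin n))
    (K : ℝ) (hK : 0 < K)
    (hF : ∀ u v, ‖F u - F v‖ ≤ K * ‖u - v‖)
    (S h : ℝ) (hS : 0 < S) (hh : 0 ≤ h)
    (y₁ y₂ : ℝ → EuclideanSpace ℝ (Fin n))
    (η₁ η₂ : ℝ → EuclideanSpace ℝ (Fin n))
    (hη₁int : IntervalIntegrable η₁ volume t₀ tN)
    (hη₂int : IntervalIntegrable η₂ volume t₀ tN)
    (hy₁cont : ContinuousOn y₁ (Set.Icc t₀ tN))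
    (hy₂cont : ContinuousOn y₂ (Set.Icc t₀ tN))
    (hη₁bound : ∀ t ∈ Set.Icc t₀ tN, ‖η₁ t‖ ≤ S * h)
    (hη₂bound : ∀ t ∈ Set.Icc t₀ tN, ‖η₂ t‖ ≤ S * h)
    (heq₁ : ∀ t ∈ Set.Icc t₀ tN,
      y₁ t = y₀ + (∫ s in t₀..t, F (y₁ s)) + ∫ s in t₀..t, η₁ s)
    (heq₂ : ∀ t ∈ Set.Icc t₀ tN,
      y₂ t = y₀ + (∫ s in t₀..t, F (y₂ s)) + ∫ s in t₀..t, η₂ s) :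
    ∀ t ∈ Set.Icc t₀ tN,
      ‖y₁ t - y₂ t‖ ≤ 2 * S * (tN - t₀) * h * Real.exp (K * (tN - t₀)) := by
  set g : ℝ → ℝ := fun t => ‖y₁ t - y₂ t‖ with hgdef
  have hFcont : Continuous F := by
    have : LipschitzWith (Real.toNNReal K) F := by
      apply LipschitzWith.of_dist_le_mul
      intro u v
      rw [dist_eq_norm, dist_eq_norm, Real.coe_toNNReal K hK.le]
      exact hF u v
    exact this.continuous
  have hgcont : ContinuousOn g (Set.Icc t₀ tN) := (hy₁cont.sub hy₂cont).norm
  have hgnn : ∀ t, 0 ≤ g t := fun t => norm_nonneg _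
  set ε : ℝ := 2 * S * h * (tN - t₀) with hε
  have htNnn : 0 ≤ tN - t₀ := sub_nonneg.2 h_le
  have hεnn : 0 ≤ ε := by positivity
  set G : ℝ → ℝ := fun x => ∫ s in t₀..x, g s with hGdef
  have hgint : ∀ t ∈ Set.Icc t₀ tN, IntervalIntegrable g volume t₀ t := by
    intro t ht
    exact (hgcont.mono (Set.Icc_subset_Icc_right ht.2)).intervalIntegrable_of_Icc ht.1
  -- the key integral inequality
  have key : ∀ t ∈ Set.Icc t₀ tN, g t ≤ K * G t + ε := by
    intro t ht
    obtain ⟨ht1, ht2⟩ := ht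
    have hIccsub : Set.Icc t₀ t ⊆ Set.Icc t₀ tN := Set.Icc_subset_Icc_right ht2
    have husub : Set.uIcc t₀ t ⊆ Set.uIcc t₀ tN := by
      rw [Set.uIcc_of_le ht1, Set.uIcc_of_le h_le]; exact hIccsub
    have intη₁ : IntervalIntegrable η₁ volume t₀ t := hη₁int.mono_set husub
    have intη₂ : IntervalIntegrable η₂ volume t₀ t := hη₂int.mono_set husub
    have intF₁ : IntervalIntegrable (fun s => F (y₁ s)) volume t₀ t :=
      ((hFcont.comp_continuousOn hy₁cont).mono hIccsub).intervalIntegrable_of_Icc ht1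
    have intF₂ : IntervalIntegrable (fun s => F (y₂ s)) volume t₀ t :=
      ((hFcont.comp_continuousOn hy₂cont).mono hIccsub).intervalIntegrable_of_Icc ht1
    have intg : IntervalIntegrable g volume t₀ t := hgint t ⟨ht1, ht2⟩
    have hsplit : y₁ t - y₂ t =
        (∫ s in t₀..t, (F (y₁ s) - F (y₂ s))) + ∫ s in t₀..t, (η₁ s - η₂ s) := by
      rw [intervalIntegral.integral_sub intF₁ intF₂,
        intervalIntegral.integral_sub intη₁ intη₂, heq₁ t ⟨ht1, ht2⟩, heq₂ t ⟨ht1, ht2⟩]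
      abel
    have b1 : ‖∫ s in t₀..t, (F (y₁ s) - F (y₂ s))‖ ≤ K * G t := by
      calc ‖∫ s in t₀..t, (F (y₁ s) - F (y₂ s))‖
          ≤ ∫ s in t₀..t, ‖F (y₁ s) - F (y₂ s)‖ :=
            intervalIntegral.norm_integral_le_integral_norm ht1
        _ ≤ ∫ s in t₀..t, K * g s := by
            apply intervalIntegral.integral_mono_on ht1 ((intF₁.sub intF₂).norm)
              (intg.const_mul K)
            intro s _
            exact hF (y₁ s) (y₂ s)
        _ = K * G t := intervalIntegral.integral_const_mul K g
    have b2 : ‖∫ s in t₀..t, (η₁ s - η₂ s)‖ ≤ 2 * S * h * (t - t₀) := by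
      calc ‖∫ s in t₀..t, (η₁ s - η₂ s)‖
          ≤ ∫ s in t₀..t, ‖η₁ s - η₂ s‖ :=
            intervalIntegral.norm_integral_le_integral_norm ht1
        _ ≤ ∫ s in t₀..t, (2 * S * h : ℝ) := by
            apply intervalIntegral.integral_mono_on ht1 ((intη₁.sub intη₂).norm)
              intervalIntegrable_const
            intro s hs
            calc ‖η₁ s - η₂ s‖ ≤ ‖η₁ s‖ + ‖η₂ s‖ := norm_sub_le _ _
              _ ≤ S * h + S * h := add_le_add (hη₁bound s (hIccsub hs)) (hη₂bound s (hIccsub hs))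
              _ = 2 * S * h := by ring
        _ = 2 * S * h * (t - t₀) := by
            rw [intervalIntegral.integral_const, smul_eq_mul]; ring
    calc g t = ‖(∫ s in t₀..t, (F (y₁ s) - F (y₂ s))) + ∫ s in t₀..t, (η₁ s - η₂ s)‖ := by
          rw [hgdef]; simp only [hsplit]
      _ ≤ ‖∫ s in t₀..t, (F (y₁ s) - F (y₂ s))‖ + ‖∫ s in t₀..t, (η₁ s - η₂ s)‖ :=
          norm_add_le _ _
      _ ≤ K * G t + 2 * S * h * (t - t₀) := add_le_add b1 b2
      _ ≤ K * G t + ε := by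
          rw [hε]
          have : 2 * S * h * (t - t₀) ≤ 2 * S * h * (tN - t₀) := by
            apply mul_le_mul_of_nonneg_left (by linarith) (by positivity)
          linarith
  have hGnn : ∀ t ∈ Set.Icc t₀ tN, 0 ≤ G t := by
    intro t ht
    exact intervalIntegral.integral_nonneg ht.1 (fun s _ => hgnn s)
  -- Gronwall
  have hGcont : ContinuousOn G (Set.uIcc t₀ tN) := by
    apply intervalIntegral.continuousOn_primitive_interval
    rw [Set.uIcc_of_le h_le]
    exact hgcont.integrableOn_Icc
  have hGderiv : ∀ x ∈ Set.Ico t₀ tN, HasDerivWithinAt G (g x) (Set.Ici x) x := by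
    intro x hx
    have hmem : Set.Icc t₀ tN ∈ nhdsWithin x (Set.Ici x) := by
      have h1 : Set.Iio tN ∈ nhds x := Iio_mem_nhds hx.2
      have h2 : Set.Ici x ∩ Set.Iio tN ∈ nhdsWithin x (Set.Ici x) :=
        Filter.inter_mem self_mem_nhdsWithin (nhdsWithin_le_nhds h1)
      apply Filter.mem_of_superset h2
      rintro s ⟨hs1, hs2⟩
      exact ⟨hx.1.trans hs1, hs2.le⟩
    have hmem' : Set.Icc t₀ tN ∈ nhdsWithin x (Set.Ioi x) :=
      nhdsWithin_mono x Set.Ioi_subset_Ici_self hmem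
    apply intervalIntegral.integral_hasDerivWithinAt_right
      (hgint x ⟨hx.1, hx.2.le⟩) (t := Set.Ioi x)
    · exact ⟨Set.Icc t₀ tN, hmem', hgcont.aestronglyMeasurable measurableSet_Icc⟩
    · exact (hgcont x ⟨hx.1, hx.2.le⟩).mono_of_mem_nhdsWithin hmem'
  have hgron := norm_le_gronwallBound_of_norm_deriv_right_le
    (hGcont.mono (by rw [Set.uIcc_of_le h_le])) hGderiv
    (δ := 0) (by simp [hGdef]) (K := K) (ε := ε)
    (fun x hx => by
      rw [Real.norm_of_nonneg (hgnn x), Real.norm_of_nonneg (hGnn x ⟨hx.1, hx.2.le⟩)]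
      exact key x ⟨hx.1, hx.2.le⟩)
  intro t ht
  have hGb := hgron t ht
  rw [Real.norm_of_nonneg (hGnn t ht)] at hGb
  rw [gronwallBound_of_K_ne_0 hK.ne'] at hGb
  have hfinal : g t ≤ ε * Real.exp (K * (t - t₀)) := by
    have := key t ht
    have hKG : K * G t ≤ K * (0 * Real.exp (K * (t - t₀)) +
        ε / K * (Real.exp (K * (t - t₀)) - 1)) := by
      exact mul_le_mul_of_nonneg_left hGb hK.le
    have hdiv : K * (ε / K) = ε := by field_simp
    calc g t ≤ K * G t + ε := this
      _ ≤ K * (0 * Real.exp (K * (t - t₀)) + ε / K * (Real.exp (K * (t - t₀)) - 1)) + ε := by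
          linarith
      _ = ε * Real.exp (K * (t - t₀)) := by field_simp; ring
  have hexp : Real.exp (K * (t - t₀)) ≤ Real.exp (K * (tN - t₀)) := by
    apply Real.exp_le_exp.2
    apply mul_le_mul_of_nonneg_left (by linarith [ht.2]) hK.le
  calc ‖y₁ t - y₂ t‖ = g t := rfl
    _ ≤ ε * Real.exp (K * (t - t₀)) := hfinal
    _ ≤ ε * Real.exp (K * (tN - t₀)) := mul_le_mul_of_nonneg_left hexp hεnn
    _ = 2 * S * (tN - t₀) * h * Real.exp (K * (tN - t₀)) := by rw [hε]; ring
end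

section
/- The function f(x,y) = (½ y² + (2εx − 1)/(4ε²))·e^{2εx} is a first integral of the neutral damping equation x'' + ε (x')² + x = 0: along any C² solution x(t) with y(t) = x'(t), the quantity f(x(t), y(t)) is constant in t. -/
/-!
Along a curve `t ↦ (x t, y t)` with `x' = y`, the time derivative of
`F(x, y) = (½ y² + (2εx − 1)/(4ε²)) e^{2εx}` factors as `y (y' + ε y² + x) e^{2εx}`:
the two `1/(2ε)` terms cancel. The middle factor is the left-hand side of the equation, so the
derivative vanishes along every solution and `F` is constant there by the mean value theorem.
-/

open Real

noncomputable def neutralDampingIntegral (ε u v : ℝ) : ℝ :=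
  ((1 / 2) * v ^ 2 + (2 * ε * u - 1) / (4 * ε ^ 2)) * exp (2 * ε * u)

theorem hasDerivAt_neutralDampingIntegral_comp {ε : ℝ} (hε : ε ≠ 0) {x y : ℝ → ℝ} {a t : ℝ}
    (hx : HasDerivAt x (y t) t) (hy : HasDerivAt y a t) :
    HasDerivAt (fun s => neutralDampingIntegral ε (x s) (y s))
      (y t * (a + ε * y t ^ 2 + x t) * exp (2 * ε * x t)) t := by
  have hpoly : HasDerivAt (fun s => (1 / 2) * y s ^ 2 + (2 * ε * x s - 1) / (4 * ε ^ 2))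
      ((1 / 2) * (2 * y t * a) + 2 * ε * y t / (4 * ε ^ 2)) t := by
    refine (((hy.fun_pow 2).const_mul (1 / 2)).fun_add
      (((hx.const_mul (2 * ε)).sub_const 1).div_const (4 * ε ^ 2))).congr_deriv ?_
    ring
  have hexp : HasDerivAt (fun s => exp (2 * ε * x s)) (exp (2 * ε * x t) * (2 * ε * y t)) t :=
    (hx.const_mul (2 * ε)).exp
  refine (hpoly.fun_mul hexp).congr_deriv ?_
  field_simp
  ring

/-- `f(x,y) = (½ y² + (2εx − 1)/(4ε²))·e^{2εx}` is a first integral of the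
neutral damping equation `x'' + ε (x')² + x = 0`. -/
theorem neutral_damping_first_integral
    (ε : ℝ) (hε : ε ≠ 0) (x : ℝ → ℝ) (hx : ContDiff ℝ 2 x)
    (heq : ∀ t, deriv (deriv x) t + ε * (deriv x t) ^ 2 + x t = 0)
    (f : ℝ → ℝ → ℝ)
    (hf : ∀ u v, f u v =
      ((1 / 2) * v ^ 2 + (2 * ε * u - 1) / (4 * ε ^ 2)) * Real.exp (2 * ε * u)) :
    ∀ t s : ℝ, f (x t) (deriv x t) = f (x s) (deriv x s) := by
  have hF : ∀ t, HasDerivAt (fun s => neutralDampingIntegral ε (x s) (deriv x s)) 0 t := by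
    intro t
    have h := hasDerivAt_neutralDampingIntegral_comp hε
      ((hx.differentiable two_ne_zero t).hasDerivAt)
      ((hx.differentiable_deriv_two t).hasDerivAt)
    rwa [heq t, mul_zero, zero_mul] at h
  intro t s
  simp only [hf]
  exact is_const_of_deriv_eq_zero (fun u => (hF u).differentiableAt) (fun u => (hF u).deriv) t s
end
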